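/- arXiv:1105.6317 — 3 statements merged into one kernel-verified Lean document; each statement's English description precedes it below -/
import Mathlib

section
/- Let P : F → Set D be a thread preserver in a system of difference-variable constraints satisfying the join-closure property, and suppose for each flow point f there is α_f ∈ P(f) that is minimal in the containment order among elements of P(f) and is below (⊑) every element of P(f) (i.e., a least element). Then f ↦ {α_f} is a singleton thread preserver: every transition (f, g, R) satisfies R(α_f, α_g). -/
theorem rel_of_le_right {D : Type*} [SemilatticeSup D] {R : D → D → Prop}
    (hjoin : ∀ α β γ δ : D, R α β → R α γ → δ ≤ β ⊔ γ → R α δ)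
    {α β δ : D} (h : R α β) (hδ : δ ≤ β) : R α δ :=
  hjoin α β β δ h h (hδ.trans le_sup_left)

theorem stmt_11_general {F D : Type*} [SemilatticeSup D]
    (T : Set (F × F × (D → D → Prop)))
    (hclos : ∀ τ ∈ T,
      (∀ α β γ : D, τ.2.2 α β → α ≤ γ → τ.2.2 γ β) ∧
      (∀ α β γ δ : D, τ.2.2 α β → τ.2.2 α γ → δ ≤ β ⊔ γ → τ.2.2 α δ))
    (P : F → Set D)
    (hTP : ∀ τ ∈ T, ∀ α ∈ P τ.1, ∃ β ∈ P τ.2.1, τ.2.2 α β)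
    (a : F → D)
    (hleast : ∀ f, a f ∈ P f ∧ ∀ β ∈ P f, a f ≤ β) :
    ∀ τ ∈ T, τ.2.2 (a τ.1) (a τ.2.1) := by
  intro τ hτ
  obtain ⟨β, hβ, hR⟩ := hTP τ hτ _ (hleast τ.1).1
  exact rel_of_le_right (hclos τ hτ).2 hR ((hleast τ.2.1).2 β hβ)

/-- If P is a thread preserver in a system whose transition relations satisfy
the join-closure properties, and each P f has a least element α_f in the
containment order, then f ↦ {α_f} is a singleton thread preserver. -/
theorem stmt_11 {F D : Type*} [SemilatticeSup D]
    (T : Set (F × F × (D → D → Prop)))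
    (hclos : ∀ τ ∈ T,
      (∀ α β γ : D, τ.2.2 α β → α ≤ γ → τ.2.2 γ β) ∧
      (∀ α β γ δ : D, τ.2.2 α β → τ.2.2 α γ → δ ≤ β ⊔ γ → τ.2.2 α δ))
    (P : F → Set D)
    (hTP : ∀ τ ∈ T, ∀ α ∈ P τ.1, ∃ β ∈ P τ.2.1, τ.2.2 α β)
    (hfin : ∀ f, (P f).Finite)
    (a : F → D)
    (hleast : ∀ f, a f ∈ P f ∧ ∀ β ∈ P f, a f ≤ β) :
    ∀ τ ∈ T, τ.2.2 (a τ.1) (a τ.2.1) :=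
  stmt_11_general T hclos P hTP a hleast
end

section
/- Let G be a relation on a finite set V of 2n nodes (n 'source' nodes and n 'target' nodes) representing an idempotent cyclic MC, extended with shortcut identifications x_i' ↔ x_i. If G^♦ contains a forward cycle F traversing s shortcut edges and a backward cycle B traversing ŝ shortcut edges, at least one cycle strict, and an arc from a node of F to a node of B, then the infinite unwinding (G)^ω contains an infinite down-thread and an infinite up-thread, one of them infinitely often strict, with the down-thread node related (≥) to the up-thread node at each time step (after appropriate path closure). In particular, (G)^ω is unsatisfiable over ℤ. -/
/-!
Suppose σ solves (G)^ω. Follow the forward cycle from `hi a` forwards in time (a down-thread)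
and the backward cycle from `lo b` backwards in time (an up-thread): after one common period
`P = s₁ s₂` they are back at `hi a` and `lo b`. Since one of the cycles is strict, the gap
`σ τ (hi a) - σ τ (lo b)` therefore drops by at least 1 every `P` steps, while the arc from
`hi a` to `lo b`, present in every copy of G, keeps it nonnegative: impossible over ℤ.
-/

open Finset Function

/-- Copy `k` of G in (G)^ω reads its source nodes at time `k` and its target nodes at time
`k + 1`. -/
def SatisfiesUnwinding {ι : Type*} (Arc : ι ⊕ ι → ι ⊕ ι → ℤ → Prop)
    (σ : ℕ → ι → ℤ) : Prop :=
  ∀ (k : ℕ) (u v : ι ⊕ ι) (w : ℤ), Arc u v w →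
    Sum.elim (σ k) (σ (k + 1)) v ≤ Sum.elim (σ k) (σ (k + 1)) u + w

namespace SatisfiesUnwinding

variable {ι : Type*} {Arc : ι ⊕ ι → ι ⊕ ι → ℤ → Prop} {σ : ℕ → ι → ℤ}

theorem le_of_arc_inl_inl (hσ : SatisfiesUnwinding Arc σ) {i j : ι} {w : ℤ}
    (h : Arc (Sum.inl i) (Sum.inl j) w) (τ : ℕ) : σ τ j ≤ σ τ i + w :=
  hσ τ _ _ w h

theorem down_thread (hσ : SatisfiesUnwinding Arc σ) {x : ℕ → ι} {w : ℕ → ℤ}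
    (hx : ∀ k, Arc (Sum.inl (x k)) (Sum.inr (x (k + 1))) (w k)) (τ c t : ℕ) :
    σ (τ + t) (x (c + t)) ≤ σ τ (x c) + ∑ j ∈ range t, w (c + j) := by
  induction t with
  | zero => simp
  | succ t ih =>
    have step := hσ (τ + t) _ _ _ (hx (c + t))
    simp only [Sum.elim_inl, Sum.elim_inr] at step
    rw [sum_range_succ, ← add_assoc, ← add_assoc]
    linarith

theorem up_thread (hσ : SatisfiesUnwinding Arc σ) {y : ℕ → ι} {w : ℕ → ℤ}
    (hy : ∀ k, Arc (Sum.inr (y k)) (Sum.inl (y (k + 1))) (w k)) (τ c t : ℕ) :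
    σ τ (y (c + t)) ≤ σ (τ + t) (y c) + ∑ j ∈ range t, w (c + j) := by
  induction t generalizing τ with
  | zero => simp
  | succ t ih =>
    have step := hσ τ _ _ _ (hy (c + t))
    simp only [Sum.elim_inl, Sum.elim_inr] at step
    have rest := ih (τ + 1)
    rw [add_right_comm τ 1 t] at rest
    rw [sum_range_succ, ← add_assoc c, ← add_assoc τ]
    linarith

end SatisfiesUnwinding

theorem Function.Periodic.sum_range_add {M : Type*} [AddCancelCommMonoid M] {f : ℕ → M}
    {p : ℕ} (hf : Periodic f p) (c : ℕ) :
    ∑ j ∈ range p, f (c + j) = ∑ j ∈ range p, f j := by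
  induction c with
  | zero => simp
  | succ c ih =>
    rw [← ih]
    apply add_right_cancel (b := f c)
    calc ∑ j ∈ range p, f (c + 1 + j) + f c
        = ∑ j ∈ range (p + 1), f (c + j) := by
          rw [sum_range_succ' (fun j => f (c + j))]
          simp only [add_right_comm c 1, add_assoc, add_zero]
      _ = ∑ j ∈ range p, f (c + j) + f c := by rw [sum_range_succ, hf c]

theorem Function.Periodic.sum_range_add_neg {f : ℕ → ℤ} {p k : ℕ} (hf : Periodic f p)
    (hp : 0 < p) (hle : ∀ j, f j ≤ 0) (hk : f k < 0) (c : ℕ) :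
    ∑ j ∈ range p, f (c + j) < 0 := by
  rw [hf.sum_range_add c]
  exact sum_neg' (fun j _ => hle j)
    ⟨k % p, mem_range.mpr (Nat.mod_lt k hp), (hf.map_mod_nat k).symm ▸ hk⟩

theorem exists_neg_of_forall_add_lt {f : ℕ → ℤ} {p : ℕ} (hf : ∀ t, f (t + p) < f t) :
    ∃ t, f t < 0 := by
  have hdrop : ∀ q : ℕ, f (q * p) ≤ f 0 - q := by
    intro q
    induction q with
    | zero => simp
    | succ q ih => have := hf (q * p); rw [Nat.succ_mul]; push_cast; linarith
  refine ⟨((f 0).toNat + 1) * p, ?_⟩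
  have := hdrop ((f 0).toNat + 1)
  push_cast at this
  omega

/-- Soundness of the local test LTTS for an idempotent cyclic MC G, given in
weighted-graph form (arc u → v of weight 0 meaning ≥, weight −1 meaning >):
if G^♦ has a (periodic) forward cycle `hi` (unwinding to a down-thread), a
backward cycle `lo` (unwinding to an up-thread), at least one of them strict,
and an arc from a node of the forward cycle to a node of the backward cycle,
then the infinite unwinding (G)^ω is unsatisfiable over ℤ: no assignment
σ : ℕ × {1..n} → ℤ satisfies all the arcs of every copy of G. -/
theorem stmt_16 (n s₁ s₂ : ℕ) (hs₁ : 1 ≤ s₁) (hs₂ : 1 ≤ s₂)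
    (Arc : (Fin n ⊕ Fin n) → (Fin n ⊕ Fin n) → ℤ → Prop)
    (hi lo : ℕ → Fin n) (wF wB : ℕ → ℤ)
    (hper : ∀ k, hi (k + s₁) = hi k) (lper : ∀ k, lo (k + s₂) = lo k)
    (wFper : ∀ k, wF (k + s₁) = wF k) (wBper : ∀ k, wB (k + s₂) = wB k)
    (hF : ∀ k, Arc (Sum.inl (hi k)) (Sum.inr (hi (k + 1))) (wF k) ∧
      (wF k = 0 ∨ wF k = -1))
    (hB : ∀ k, Arc (Sum.inr (lo k)) (Sum.inl (lo (k + 1))) (wB k) ∧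
      (wB k = 0 ∨ wB k = -1))
    (hstrict : (∃ k, wF k = -1) ∨ (∃ k, wB k = -1))
    (a b : ℕ)
    (harc : ∃ w, Arc (Sum.inl (hi a)) (Sum.inl (lo b)) w ∧ w ≤ 0) :
    ¬ ∃ σ : ℕ → Fin n → ℤ, ∀ (k : ℕ) (u v : Fin n ⊕ Fin n) (w : ℤ),
      Arc u v w →
        Sum.elim (σ k) (σ (k + 1)) v ≤ Sum.elim (σ k) (σ (k + 1)) u + w := by
  rintro ⟨σ, hσ⟩
  change SatisfiesUnwinding Arc σ at hσ
  obtain ⟨P, hP, hiP, wFP, loP, wBP⟩ : ∃ P, 0 < P ∧ Periodic hi P ∧ Periodic wF P ∧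
      Periodic lo P ∧ Periodic wB P :=
    ⟨s₂ * s₁, Nat.mul_pos hs₂ hs₁, Periodic.nat_mul hper s₂,
      Periodic.nat_mul wFper s₂, mul_comm s₁ s₂ ▸ Periodic.nat_mul lper s₁,
      mul_comm s₁ s₂ ▸ Periodic.nat_mul wBper s₁⟩
  have hwF : ∀ k, wF k ≤ 0 := fun k => by rcases (hF k).2 with h | h <;> omega
  have hwB : ∀ k, wB k ≤ 0 := fun k => by rcases (hB k).2 with h | h <;> omega
  have hcycles : ∑ j ∈ range P, wF (a + j) + ∑ j ∈ range P, wB (b + j) < 0 := by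
    rcases hstrict with ⟨k, hk⟩ | ⟨k, hk⟩
    · linarith [wFP.sum_range_add_neg hP hwF (hk.trans_lt neg_one_lt_zero) a,
        sum_nonpos fun j (_ : j ∈ range P) => hwB (b + j)]
    · linarith [wBP.sum_range_add_neg hP hwB (hk.trans_lt neg_one_lt_zero) b,
        sum_nonpos fun j (_ : j ∈ range P) => hwF (a + j)]
  have hshrink : ∀ τ, σ (τ + P) (hi a) - σ (τ + P) (lo b) < σ τ (hi a) - σ τ (lo b) := by
    intro τ
    have hdown := hσ.down_thread (fun k => (hF k).1) τ a P
    have hup := hσ.up_thread (fun k => (hB k).1) τ b P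
    rw [hiP a] at hdown
    rw [loP b] at hup
    linarith
  obtain ⟨τ, hτ⟩ := exists_neg_of_forall_add_lt hshrink
  obtain ⟨w, hw, hw0⟩ := harc
  linarith [hσ.le_of_arc_inl_inl hw τ]
end

section
/- Let G be an idempotent cyclic monotonicity constraint (consequence-closed, satisfiable) such that G does not entail x_i < x_i' together with x_j > x_j' and x_j ≥ x_i simultaneously for any i, j. Extend G with a fresh variable x₀ constrained by x₀ = x₀', adding x_i > x₀ ∧ x_i' > x₀' whenever G ⊢ x_i < x_i', adding x_i < x₀ ∧ x_i' < x₀' whenever G ⊢ x_i > x_i', and relating any remaining variables above x₀. Then the extended constraint Ĝ remains satisfiable and idempotent. -/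
/-!
The fresh variable x₀ is put strictly below every x_i that is *forced below*, i.e. some copy of
which lies below a decreasing variable in the constraint graph of `G ; G`, and strictly above
every other x_i. Idempotence lets a path of that graph between the two outer levels be closed
into a relation of `G`; this makes the forced-below variables closed downwards along `G`, so
raising all the others yields a solution, and together with the failure of LTT1 it keeps the
increasing variables out of the forced-below ones.

For idempotence of the extension `Ĝ`, take a solution `(σ, τ)` of `Ĝ` and `K` larger than every
path weight of the graph. Seeding the outer levels with `Kσ` and `Kτ` and the middle level with
the least values on the correct side of x₀, the longest-path potential is a middle valuation `ν`
with `(Kσ, ν)` and `(ν, Kτ)` solutions of `Ĝ`. So whatever `Ĝ ; Ĝ` entails holds at `(Kσ, Kτ)`,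
hence at `(σ, τ)`.
-/

/-- Constraint evaluation for an arc with strictness flag, over variables `V`. -/
def CmpB {V : Type*} (σ τ : V → ℤ) (u v : V ⊕ V) (b : Bool) : Prop :=
  if b then Sum.elim σ τ v < Sum.elim σ τ u else Sum.elim σ τ v ≤ Sum.elim σ τ u

/-- Satisfaction of a monotonicity constraint over variables `V`. -/
def MCSat {V : Type*} (G : (V ⊕ V) → (V ⊕ V) → Bool → Prop)
    (σ τ : V → ℤ) : Prop :=
  ∀ u v b, G u v b → CmpB σ τ u v b

namespace MonotonicityConstraint

open Sum

section WeightedPath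

variable {N : Type*} (E : N → N → ℕ → Prop)

inductive WeightedPath : N → N → ℕ → Prop
  | refl (x : N) : WeightedPath x x 0
  | tail {x y z : N} {d e : ℕ} : WeightedPath x y d → E y z e → WeightedPath x z (d + e)

variable {E}

namespace WeightedPath

lemma single {x y : N} {d : ℕ} (h : E x y d) : WeightedPath E x y d := by
  simpa using (refl x).tail h

lemma trans {x y z : N} {d e : ℕ} (h₁ : WeightedPath E x y d) (h₂ : WeightedPath E y z e) :
    WeightedPath E x z (d + e) := by
  induction h₂ with
  | refl => simpa using h₁
  | tail _ he ih => simpa [add_assoc] using ih.tail he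

lemma le_of_forall_edge {f : N → ℤ} (hf : ∀ x y d, E x y d → f x + d ≤ f y) {x y : N} {d : ℕ}
    (h : WeightedPath E x y d) : f x + d ≤ f y := by
  induction h with
  | refl => simp
  | tail _ he ih => have := hf _ _ _ he; push_cast; omega

end WeightedPath

variable (E) in
noncomputable def potential (h : N → ℤ) (x : N) : ℤ :=
  sSup {z | ∃ y d, WeightedPath E y x d ∧ h y + d = z}

section Potential

variable {h : N → ℤ} {D : ℕ} (hh : BddAbove (Set.range h))
  (hD : ∀ x y d, WeightedPath E x y d → d ≤ D)

include hh hD in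
lemma le_potential {x y : N} {d : ℕ} (hp : WeightedPath E y x d) :
    h y + d ≤ potential E h x := by
  obtain ⟨M, hM⟩ := hh
  refine le_csSup ⟨M + D, ?_⟩ ⟨y, d, hp, rfl⟩
  rintro _ ⟨y', d', hp', rfl⟩
  have := hM ⟨y', rfl⟩
  have := hD _ _ _ hp'
  omega

lemma potential_le {x : N} {B : ℤ} (hB : ∀ y d, WeightedPath E y x d → h y + d ≤ B) :
    potential E h x ≤ B :=
  csSup_le ⟨h x, x, 0, .refl x, by simp⟩ (by rintro _ ⟨y, d, hp, rfl⟩; exact hB y d hp)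

include hh hD in
lemma potential_edge {x y : N} {d : ℕ} (he : E x y d) :
    potential E h x + d ≤ potential E h y := by
  have : potential E h x ≤ potential E h y - d := potential_le fun z e hp => by
    have := le_potential hh hD (hp.tail he)
    push_cast at this
    omega
  omega

end Potential

end WeightedPath

section Constraint

variable {V : Type*} {G : (V ⊕ V) → (V ⊕ V) → Bool → Prop}

lemma cmpB_iff {σ τ : V → ℤ} {u v : V ⊕ V} {b : Bool} :
    CmpB σ τ u v b ↔ Sum.elim σ τ v + b.toNat ≤ Sum.elim σ τ u := by
  cases b <;> simp [CmpB]

lemma elim_smul (K : ℤ) (σ τ : V → ℤ) (x : V ⊕ V) :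
    Sum.elim (K • σ) (K • τ) x = K * Sum.elim σ τ x := by
  cases x <;> rfl

lemma cmpB_smul_iff {K : ℤ} (hK : 0 < K) {σ τ : V → ℤ} {u v : V ⊕ V} {b : Bool} :
    CmpB (K • σ) (K • τ) u v b ↔ CmpB σ τ u v b := by
  cases b <;> simp only [CmpB, if_true, Bool.false_eq_true, if_false, elim_smul,
    mul_lt_mul_iff_right₀ hK, mul_le_mul_iff_right₀ hK]

lemma MCSat.smul {K : ℤ} (hK : 0 < K) {σ τ : V → ℤ} (h : MCSat G σ τ) :
    MCSat G (K • σ) (K • τ) :=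
  fun u v b hg => (cmpB_smul_iff hK).2 (h u v b hg)

variable (G) in
def Entails (d : ℕ) (p q : V ⊕ V) : Prop :=
  ∀ σ τ, MCSat G σ τ → Sum.elim σ τ p + d ≤ Sum.elim σ τ q

lemma entails_of_mem {u v : V ⊕ V} {b : Bool} (h : G u v b) : Entails G b.toNat v u :=
  fun _ _ hs => cmpB_iff.1 (hs u v b h)

lemma Entails.mono {d d' : ℕ} {p q : V ⊕ V} (h : Entails G d p q) (hd : d' ≤ d) :
    Entails G d' p q := fun _ _ hs => by
  have := h _ _ hs
  have : (d' : ℤ) ≤ d := by exact_mod_cast hd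
  omega

variable (G) in
def MCIdempotent : Prop :=
  ∀ u v b, (∀ σ τ : V → ℤ, (∃ μ, MCSat G σ μ ∧ MCSat G μ τ) → CmpB σ τ u v b) ↔
    (∀ σ τ, MCSat G σ τ → CmpB σ τ u v b)

namespace MCIdempotent

variable (hG : MCIdempotent G)
include hG

lemma mcsat_trans {σ μ τ : V → ℤ} (h₁ : MCSat G σ μ) (h₂ : MCSat G μ τ) : MCSat G σ τ :=
  fun u v b hg => (hG u v b).2 (fun _ _ hs => hs u v b hg) σ τ ⟨μ, h₁, h₂⟩

/-- Over the composition only strictness, not the size of a margin, survives. -/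
lemma entails_of_comp {d : ℕ} {p q : V ⊕ V}
    (h : ∀ σ μ τ, MCSat G σ μ → MCSat G μ τ → Sum.elim σ τ p + d ≤ Sum.elim σ τ q) :
    Entails G (min d 1) p q := by
  have key := (hG q p (decide (0 < d))).1 fun σ τ ⟨μ, h₁, h₂⟩ => by
    have := h σ μ τ h₁ h₂
    rw [cmpB_iff]
    rcases Nat.eq_zero_or_pos d with rfl | hd <;> (simp_all; try omega)
  intro σ τ hs
  have := cmpB_iff.1 (key σ τ hs)
  rcases Nat.eq_zero_or_pos d with rfl | hd <;> (simp_all; try omega)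

lemma exists_comp (hsat : ∃ σ τ, MCSat G σ τ) :
    ∃ σ μ τ : V → ℤ, MCSat G σ μ ∧ MCSat G μ τ := by
  by_contra! hnone
  obtain ⟨σ, τ, hs⟩ := hsat
  rcases isEmpty_or_nonempty V with hV | ⟨⟨a⟩⟩
  · exact hnone σ σ σ (fun u => isEmptyElim u) (fun u => isEmptyElim u)
  · have := (hG (inl a) (inl a) true).1
      (fun σ τ ⟨μ, h₁, h₂⟩ => (hnone σ μ τ h₁ h₂).elim) σ τ hs
    simp [CmpB] at this

end MCIdempotent

end Constraint

section CompositionGraph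

variable {V : Type*} {G : (V ⊕ V) → (V ⊕ V) → Bool → Prop}

/-- A node `(a, k)` stands for the variable `a` in the `k`-th valuation of a triple `σ, μ, τ`. -/
def place : Fin 2 → V ⊕ V → V × Fin 3
  | t, inl a => (a, t.castSucc)
  | t, inr a => (a, t.succ)

def outer : V ⊕ V → V × Fin 3
  | inl a => (a, 0)
  | inr a => (a, 2)

@[simp] lemma place_fst (t : Fin 2) (p : V ⊕ V) : (place t p).1 = p.elim id id := by
  cases p <;> rfl

@[simp] lemma outer_fst (p : V ⊕ V) : (outer p).1 = p.elim id id := by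
  cases p <;> rfl

lemma node_cases (x : V × Fin 3) : x.2 = 1 ∨ ∃ p, x = outer p := by
  obtain ⟨a, k⟩ := x
  fin_cases k
  exacts [Or.inr ⟨inl a, rfl⟩, Or.inl rfl, Or.inr ⟨inr a, rfl⟩]

variable (G) in
/-- The constraint graph of the composition `G ; G`: every entailed relation of `G` is
instantiated on the pair of levels `(0, 1)` and on the pair `(1, 2)`. -/
inductive CompEdge : V × Fin 3 → V × Fin 3 → ℕ → Prop
  | mk {d : ℕ} {p q : V ⊕ V} (t : Fin 2) : Entails G d p q → CompEdge (place t p) (place t q) d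

def tripleVal (σ μ τ : V → ℤ) (x : V × Fin 3) : ℤ := ![σ, μ, τ] x.2 x.1

lemma tripleVal_place_zero (σ μ τ : V → ℤ) (p : V ⊕ V) :
    tripleVal σ μ τ (place 0 p) = Sum.elim σ μ p := by
  cases p <;> rfl

lemma tripleVal_place_one (σ μ τ : V → ℤ) (p : V ⊕ V) :
    tripleVal σ μ τ (place 1 p) = Sum.elim μ τ p := by
  cases p <;> rfl

lemma tripleVal_outer (σ μ τ : V → ℤ) (p : V ⊕ V) :
    tripleVal σ μ τ (outer p) = Sum.elim σ τ p := by
  cases p <;> rfl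

lemma CompEdge.sound {σ μ τ : V → ℤ} (h₁ : MCSat G σ μ) (h₂ : MCSat G μ τ) {x y : V × Fin 3}
    {d : ℕ} (he : CompEdge G x y d) : tripleVal σ μ τ x + d ≤ tripleVal σ μ τ y := by
  obtain ⟨t, he⟩ := he
  match t with
  | 0 => simpa only [tripleVal_place_zero] using he σ μ h₁
  | 1 => simpa only [tripleVal_place_one] using he μ τ h₂

lemma mcsat_of_compEdge {f : V × Fin 3 → ℤ} (hf : ∀ x y d, CompEdge G x y d → f x + d ≤ f y)
    (t : Fin 2) : MCSat G (fun a => f (place t (inl a))) (fun a => f (place t (inr a))) := by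
  intro u v b hg
  have key := hf _ _ _ (.mk t (entails_of_mem hg))
  rw [cmpB_iff]
  cases u <;> cases v <;> exact key

namespace MCIdempotent

variable (hG : MCIdempotent G)
include hG

lemma entails_of_path {p q : V ⊕ V} {d : ℕ}
    (h : WeightedPath (CompEdge G) (outer p) (outer q) d) : Entails G (min d 1) p q :=
  hG.entails_of_comp fun _ _ _ h₁ h₂ => by
    simpa only [tripleVal_outer] using h.le_of_forall_edge fun _ _ _ he => he.sound h₁ h₂

lemma exists_pathWeight_le [Finite V] (hsat : ∃ σ τ, MCSat G σ τ) :
    ∃ D, ∀ x y d, WeightedPath (CompEdge G) x y d → d ≤ D := by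
  obtain ⟨σ, μ, τ, h₁, h₂⟩ := hG.exists_comp hsat
  obtain ⟨M, hM⟩ := (Set.finite_range fun x => |tripleVal σ μ τ x|).bddAbove
  refine ⟨(2 * M).toNat, fun x y d hp => ?_⟩
  have := hp.le_of_forall_edge fun _ _ _ he => he.sound h₁ h₂
  have hx := abs_le.1 (hM ⟨x, rfl⟩)
  have hy := abs_le.1 (hM ⟨y, rfl⟩)
  omega

end MCIdempotent

end CompositionGraph

section ForcedBelow

variable {V : Type*} {G : (V ⊕ V) → (V ⊕ V) → Bool → Prop}

variable (G) in
def Increasing (i : V) : Prop := Entails G 1 (inl i) (inr i)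

variable (G) in
def Decreasing (j : V) : Prop := Entails G 1 (inr j) (inl j)

variable (G) in
def ForcedBelow (i : V) : Prop :=
  ∃ j, Decreasing G j ∧ ∃ k d, WeightedPath (CompEdge G) (i, k) (j, 0) d

lemma Decreasing.forcedBelow {j : V} (hj : Decreasing G j) : ForcedBelow G j :=
  ⟨j, hj, 0, 0, .refl _⟩

namespace MCIdempotent

variable (hG : MCIdempotent G)
include hG

lemma forcedBelow_of_path_middle {x : V × Fin 3} {m : V} {d : ℕ}
    (hp : WeightedPath (CompEdge G) x (m, 1) d) (hm : ForcedBelow G m) : ForcedBelow G x.1 := by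
  obtain ⟨j, hj, k, e, hw⟩ := hm
  refine ⟨j, hj, x.2, ?_⟩
  -- a witness starting on an outer level is closed into a relation of `G` and re-instantiated
  match k with
  | 0 => exact ⟨_, (hp.tail (.mk 1 (hG.entails_of_path (p := inl m) (q := inl j) hw))).tail
      (.mk 0 hj)⟩
  | 1 => exact ⟨_, hp.trans hw⟩
  | 2 => exact ⟨_, hp.tail (.mk 0 (hG.entails_of_path (p := inr m) (q := inl j) hw))⟩

lemma forcedBelow_of_entails {d : ℕ} {p q : V ⊕ V} (h : Entails G d p q)
    (hq : ForcedBelow G (q.elim id id)) : ForcedBelow G (p.elim id id) := by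
  cases q with
  | inl b => simpa using hG.forcedBelow_of_path_middle (.single (.mk 1 h)) hq
  | inr b => simpa using hG.forcedBelow_of_path_middle (.single (.mk 0 h)) hq

lemma forcedBelow_of_path {x y : V × Fin 3} {d : ℕ} (hp : WeightedPath (CompEdge G) x y d)
    (hy : ForcedBelow G y.1) : ForcedBelow G x.1 := by
  induction hp with
  | refl => exact hy
  | tail _ he ih =>
    obtain ⟨t, he⟩ := he
    exact ih (by simpa using hG.forcedBelow_of_entails he (by simpa using hy))

lemma exists_decreasing_of_forcedBelow {i : V} (hi : Increasing G i) (hb : ForcedBelow G i) :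
    ∃ j, Decreasing G j ∧ Entails G 0 (inl i) (inl j) := by
  obtain ⟨j, hj, k, d, hw⟩ := hb
  have hstart : ∃ e, WeightedPath (CompEdge G) (i, 0) (i, k) e := by
    match k with
    | 0 => exact ⟨0, .refl _⟩
    | 1 => exact ⟨_, .single (.mk 0 hi)⟩
    | 2 => exact ⟨_, (WeightedPath.single (.mk 0 hi)).tail (.mk 1 hi)⟩
  obtain ⟨e, he⟩ := hstart
  exact ⟨j, hj, (hG.entails_of_path (p := inl i) (q := inl j) (he.trans hw)).mono (Nat.zero_le _)⟩

end MCIdempotent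

end ForcedBelow

section Extension

variable {V : Type*} {G : (V ⊕ V) → (V ⊕ V) → Bool → Prop}

def SplitsAt (B : V → Prop) (c : ℤ) (f : V → ℤ) : Prop :=
  ∀ i, (B i → f i < c) ∧ (¬ B i → c < f i)

lemma SplitsAt.smul {B : V → Prop} {c : ℤ} {f : V → ℤ} {K : ℤ} (hK : 0 < K)
    (h : SplitsAt B c f) : SplitsAt B (K * c) (K • f) := fun i =>
  ⟨fun hi => mul_lt_mul_of_pos_left ((h i).1 hi) hK,
    fun hi => mul_lt_mul_of_pos_left ((h i).2 hi) hK⟩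

lemma SplitsAt.elim {B : V → Prop} {c : ℤ} {f g : V → ℤ} (hf : SplitsAt B c f)
    (hg : SplitsAt B c g) (p : V ⊕ V) :
    (B (p.elim id id) → Sum.elim f g p < c) ∧ (¬ B (p.elim id id) → c < Sum.elim f g p) := by
  cases p
  exacts [hf _, hg _]

variable (G) in
inductive Extension (B : V → Prop) : (Option V ⊕ Option V) → (Option V ⊕ Option V) → Bool → Prop
  | lift {u v : V ⊕ V} {b : Bool} : G u v b → Extension B (u.map some some) (v.map some some) b
  | fresh_ge : Extension B (inl none) (inr none) false
  | fresh_le : Extension B (inr none) (inl none) false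
  | below_left {i : V} : B i → Extension B (inl none) (inl (some i)) true
  | below_right {i : V} : B i → Extension B (inr none) (inr (some i)) true
  | above_left {i : V} : ¬ B i → Extension B (inl (some i)) (inl none) true
  | above_right {i : V} : ¬ B i → Extension B (inr (some i)) (inr none) true

lemma mcsat_extension_iff {B : V → Prop} {σ τ : Option V → ℤ} :
    MCSat (Extension G B) σ τ ↔ MCSat G (σ ∘ some) (τ ∘ some) ∧ σ none = τ none ∧
      SplitsAt B (σ none) (σ ∘ some) ∧ SplitsAt B (τ none) (τ ∘ some) := by
  constructor
  · intro h
    refine ⟨fun u v b hg => ?_, ?_, fun i => ⟨fun hi => ?_, fun hi => ?_⟩,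
      fun i => ⟨fun hi => ?_, fun hi => ?_⟩⟩
    · simpa only [CmpB, Sum.elim_map] using h _ _ _ (.lift hg)
    · have h₁ := h _ _ _ .fresh_ge
      have h₂ := h _ _ _ .fresh_le
      simp only [CmpB, Bool.false_eq_true, if_false, Sum.elim_inl, Sum.elim_inr] at h₁ h₂
      omega
    · simpa [CmpB] using h _ _ _ (.below_left hi)
    · simpa [CmpB] using h _ _ _ (.above_left hi)
    · simpa [CmpB] using h _ _ _ (.below_right hi)
    · simpa [CmpB] using h _ _ _ (.above_right hi)
  · rintro ⟨hG, heq, hσ, hτ⟩ u v b h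
    cases h with
    | lift hg => simpa only [CmpB, Sum.elim_map] using hG _ _ _ hg
    | fresh_ge | fresh_le => simp [CmpB, heq]
    | below_left hi => simpa [CmpB] using (hσ _).1 hi
    | below_right hi => simpa [CmpB] using (hτ _).1 hi
    | above_left hi => simpa [CmpB] using (hσ _).2 hi
    | above_right hi => simpa [CmpB] using (hτ _).2 hi

lemma mcsat_extension_splits {B : V → Prop} {σ τ : Option V → ℤ}
    (h : MCSat (Extension G B) σ τ) (i : V) :
    (B i → σ (some i) < σ none ∧ τ (some i) < τ none) ∧
      (¬ B i → σ none < σ (some i) ∧ τ none < τ (some i)) :=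
  have ⟨_, _, hσ, hτ⟩ := mcsat_extension_iff.1 h
  ⟨fun hi => ⟨(hσ i).1 hi, (hτ i).1 hi⟩, fun hi => ⟨(hσ i).2 hi, (hτ i).2 hi⟩⟩

lemma MCIdempotent.extension_trans (hG : MCIdempotent G) {B : V → Prop} {σ μ τ : Option V → ℤ}
    (h₁ : MCSat (Extension G B) σ μ) (h₂ : MCSat (Extension G B) μ τ) :
    MCSat (Extension G B) σ τ := by
  rw [mcsat_extension_iff] at *
  exact ⟨hG.mcsat_trans h₁.1 h₂.1, h₁.2.1.trans h₂.2.1, h₁.2.2.1, h₂.2.2.2⟩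

lemma exists_mcsat_extension [Finite V] {B : V → Prop}
    (hB : ∀ d p q, Entails G d p q → B (q.elim id id) → B (p.elim id id))
    (hsat : ∃ σ τ, MCSat G σ τ) : ∃ σ τ, MCSat (Extension G B) σ τ := by
  classical
  obtain ⟨σ, τ, hs⟩ := hsat
  obtain ⟨M, hM⟩ := (Set.finite_range fun p => |Sum.elim σ τ p|).bddAbove
  have hM' : ∀ p, -M ≤ Sum.elim σ τ p ∧ Sum.elim σ τ p ≤ M := fun p => abs_le.1 (hM ⟨p, rfl⟩)
  -- lifting the variables outside `B` keeps every relation, as `B` is closed downwards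
  let s : V → ℤ := fun a => if B a then 0 else 2 * M + 2
  have hshift : ∀ p, Sum.elim (σ + s) (τ + s) p = Sum.elim σ τ p + s (p.elim id id) := by
    intro p; cases p <;> rfl
  refine ⟨fun w => w.elim (M + 1) (σ + s), fun w => w.elim (M + 1) (τ + s),
    mcsat_extension_iff.2 ⟨fun u v b hg => ?_, rfl, fun i => ?_, fun i => ?_⟩⟩
  · have hvu := entails_of_mem hg σ τ hs
    have hsvu : s (v.elim id id) ≤ s (u.elim id id) := by
      by_cases hu : B (u.elim id id)
      · simp [s, hu, hB _ _ _ (entails_of_mem hg) hu]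
      · have := hM' v
        simp only [s, hu, if_false]
        split <;> omega
    rw [cmpB_iff]
    change Sum.elim (σ + s) (τ + s) v + _ ≤ Sum.elim (σ + s) (τ + s) u
    rw [hshift, hshift]
    omega
  · have := hM' (inl i)
    by_cases hi : B i <;> simp [s, hi] at this ⊢ <;> omega
  · have := hM' (inr i)
    by_cases hi : B i <;> simp [s, hi] at this ⊢ <;> omega

end Extension

lemma mul_add_le_mul_of_add_min_one_le {a b K : ℤ} {d : ℕ} (hd : (d : ℤ) ≤ K)
    (h : a + (min d 1 : ℕ) ≤ b) : K * a + d ≤ K * b := by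
  rcases Nat.eq_zero_or_pos d with rfl | hd₀
  · simpa using mul_le_mul_of_nonneg_left (by simpa using h) (by omega : (0 : ℤ) ≤ K)
  · rw [Nat.min_eq_right hd₀] at h
    push_cast at h
    nlinarith

section Midpoint

variable {V : Type*} {G : (V ⊕ V) → (V ⊕ V) → Bool → Prop}

open Classical in
variable (G) in
/-- Seed values on the composition graph: the scaled pair on the outer levels, and on the
middle level the least value compatible with the side of the fresh variable. -/
noncomputable def midSeed (σ τ : Option V → ℤ) (K L : ℤ) : V × Fin 3 → ℤ :=
  tripleVal (K • (σ ∘ some)) (fun a => if ForcedBelow G a then L else K * σ none + 1)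
    (K • (τ ∘ some))

lemma midSeed_outer (σ τ : Option V → ℤ) (K L : ℤ) (p : V ⊕ V) :
    midSeed G σ τ K L (outer p) = K * Sum.elim (σ ∘ some) (τ ∘ some) p := by
  cases p <;> rfl

open Classical in
lemma midSeed_middle (σ τ : Option V → ℤ) (K L : ℤ) (a : V) :
    midSeed G σ τ K L (a, 1) = if ForcedBelow G a then L else K * σ none + 1 :=
  rfl

variable {σ τ : Option V → ℤ} {D : ℕ} {K L : ℤ}
  (hG : MCIdempotent G) (hst : MCSat (Extension G (ForcedBelow G)) σ τ)
  (hD : ∀ x y d, WeightedPath (CompEdge G) x y d → d ≤ D) (hK : (D : ℤ) + 1 ≤ K)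
  (hL : ∀ w, L + D < K * σ w ∧ L + D < K * τ w)

include hD in
lemma le_potential_midSeed [Finite V] {x y : V × Fin 3} {d : ℕ}
    (hp : WeightedPath (CompEdge G) y x d) :
    midSeed G σ τ K L y + d ≤ potential (CompEdge G) (midSeed G σ τ K L) x :=
  le_potential (Set.finite_range _).bddAbove hD hp

include hG hst hD hK hL in
lemma potential_midSeed_outer [Finite V] (p : V ⊕ V) :
    potential (CompEdge G) (midSeed G σ τ K L) (outer p) =
      K * Sum.elim (σ ∘ some) (τ ∘ some) p := by
  obtain ⟨hS, heq, hσ, hτ⟩ := mcsat_extension_iff.1 hst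
  refine le_antisymm (potential_le fun y d hp => ?_)
    (by simpa [midSeed_outer] using le_potential_midSeed hD (.refl (outer p)))
  have hd : (d : ℤ) ≤ D := by exact_mod_cast hD _ _ _ hp
  rcases node_cases y with hy | ⟨q, rfl⟩
  · obtain ⟨a, k⟩ := y
    obtain rfl : k = 1 := hy
    have hLp : L + D < K * Sum.elim (σ ∘ some) (τ ∘ some) p := by
      cases p
      exacts [(hL _).1, (hL _).2]
    by_cases ha : ForcedBelow G a
    · rw [midSeed_middle, if_pos ha]
      omega
    · -- `p` is not forced below, as `a` would be, so it lies strictly above the fresh variable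
      have hp' : ¬ ForcedBelow G (p.elim id id) := fun hb =>
        ha (by simpa using hG.forcedBelow_of_path hp (by simpa using hb))
      have := ((hσ.elim (heq ▸ hτ) p).2 hp')
      rw [midSeed_middle, if_neg ha]
      nlinarith
  · rw [midSeed_outer]
    exact mul_add_le_mul_of_add_min_one_le (by omega) (hG.entails_of_path hp _ _ hS)

include hG hst hD hK hL in
lemma potential_midSeed_middle_lt {i : V} (hi : ForcedBelow G i) :
    potential (CompEdge G) (midSeed G σ τ K L) (i, 1) < K * σ none := by
  obtain ⟨-, heq, hσ, hτ⟩ := mcsat_extension_iff.1 hst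
  suffices h : potential (CompEdge G) (midSeed G σ τ K L) (i, 1) ≤ K * σ none - 1 by omega
  refine potential_le fun y d hp => ?_
  have hd : (d : ℤ) ≤ D := by exact_mod_cast hD _ _ _ hp
  have hy := hG.forcedBelow_of_path hp hi
  rcases node_cases y with hy' | ⟨q, rfl⟩
  · obtain ⟨a, k⟩ := y
    obtain rfl : k = 1 := hy'
    rw [midSeed_middle, if_pos hy]
    have := (hL none).1
    omega
  · have := (hσ.elim (heq ▸ hτ) q).1 (by simpa using hy)
    rw [midSeed_outer]
    nlinarith

include hD in
lemma lt_potential_midSeed_middle [Finite V] {i : V} (hi : ¬ ForcedBelow G i) :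
    K * σ none < potential (CompEdge G) (midSeed G σ τ K L) (i, 1) := by
  have := le_potential_midSeed (σ := σ) (τ := τ) (K := K) (L := L) hD (.refl (i, 1))
  rw [midSeed_middle, if_neg hi] at this
  omega

include hG hst hD hK hL in
lemma exists_midpoint [Finite V] :
    ∃ ν, MCSat (Extension G (ForcedBelow G)) (K • σ) ν ∧
      MCSat (Extension G (ForcedBelow G)) ν (K • τ) := by
  obtain ⟨-, heq, hσ, hτ⟩ := mcsat_extension_iff.1 hst
  have hK₀ : 0 < K := by omega
  set f := potential (CompEdge G) (midSeed G σ τ K L)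
  have hf : ∀ x y d, CompEdge G x y d → f x + d ≤ f y :=
    fun _ _ _ => potential_edge (Set.finite_range _).bddAbove hD
  have hout := potential_midSeed_outer hG hst hD hK hL
  have hmid : SplitsAt (ForcedBelow G) (K * σ none) fun a => f (a, 1) := fun i =>
    ⟨potential_midSeed_middle_lt hG hst hD hK hL, lt_potential_midSeed_middle hD⟩
  refine ⟨fun w => w.elim (K * σ none) fun a => f (a, 1),
    mcsat_extension_iff.2 ⟨?_, rfl, hσ.smul hK₀, hmid⟩,
    mcsat_extension_iff.2 ⟨?_, by simp [heq], hmid, hτ.smul hK₀⟩⟩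
  · have h₀ : (fun a => f (place 0 (inl a))) = (K • σ) ∘ some := funext fun a => hout (inl a)
    rw [← h₀]
    exact mcsat_of_compEdge hf 0
  · have h₁ : (fun a => f (place 1 (inr a))) = (K • τ) ∘ some := funext fun a => hout (inr a)
    rw [← h₁]
    exact mcsat_of_compEdge hf 1

end Midpoint

lemma MCIdempotent.exists_smul_midpoint {V : Type*} [Finite V]
    {G : (V ⊕ V) → (V ⊕ V) → Bool → Prop} (hG : MCIdempotent G) (hsat : ∃ σ τ, MCSat G σ τ)
    {σ τ : Option V → ℤ} (hst : MCSat (Extension G (ForcedBelow G)) σ τ) :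
    ∃ K : ℤ, 0 < K ∧ ∃ ν, MCSat (Extension G (ForcedBelow G)) (K • σ) ν ∧
      MCSat (Extension G (ForcedBelow G)) ν (K • τ) := by
  obtain ⟨D, hD⟩ := hG.exists_pathWeight_le hsat
  obtain ⟨M, hM⟩ := (Set.finite_range fun w => -min (σ w) (τ w)).bddAbove
  refine ⟨D + 1, by positivity,
    exists_midpoint (L := -((D + 1) * M) - D - 1) hG hst hD le_rfl fun w => ?_⟩
  have hw : -min (σ w) (τ w) ≤ M := hM ⟨w, rfl⟩
  have hK : (0 : ℤ) ≤ D + 1 := by positivity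
  have hσ := mul_le_mul_of_nonneg_left (min_le_left (σ w) (τ w)) hK
  have hτ := mul_le_mul_of_nonneg_left (min_le_right (σ w) (τ w)) hK
  constructor <;> nlinarith

lemma MCIdempotent.extension {V : Type*} [Finite V] {G : (V ⊕ V) → (V ⊕ V) → Bool → Prop}
    (hG : MCIdempotent G) (hsat : ∃ σ τ, MCSat G σ τ) :
    MCIdempotent (Extension G (ForcedBelow G)) := by
  refine fun u v b => ⟨fun hC σ τ hst => ?_, fun hS σ τ ⟨μ, h₁, h₂⟩ =>
    hS σ τ (hG.extension_trans h₁ h₂)⟩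
  obtain ⟨K, hK, ν, h₁, h₂⟩ := hG.exists_smul_midpoint hsat hst
  exact (cmpB_smul_iff hK).1 (hC _ _ ⟨ν, h₁, h₂⟩)

end MonotonicityConstraint

open MonotonicityConstraint

theorem stmt_18_general (n : ℕ) (G : (Fin n ⊕ Fin n) → (Fin n ⊕ Fin n) → Bool → Prop)
    (hidem : ∀ u v b,
      (∀ σ τ : Fin n → ℤ, (∃ μ, MCSat G σ μ ∧ MCSat G μ τ) → CmpB σ τ u v b) ↔
      (∀ σ τ, MCSat G σ τ → CmpB σ τ u v b))
    (hsat : ∃ σ τ, MCSat G σ τ)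
    (hLTT1fail : ¬ ∃ i j : Fin n,
      (∀ σ τ, MCSat G σ τ → σ i < τ i) ∧
      (∀ σ τ, MCSat G σ τ → τ j < σ j) ∧
      ((∀ σ τ, MCSat G σ τ → σ i ≤ σ j) ∨ (∀ σ τ, MCSat G σ τ → τ i ≤ τ j))) :
    ∃ Ghat : (Option (Fin n) ⊕ Option (Fin n)) → (Option (Fin n) ⊕ Option (Fin n))
        → Bool → Prop,
      -- Ghat extends G
      (∀ u v b, G u v b → Ghat (Sum.map some some u) (Sum.map some some v) b) ∧
      -- x₀ = x₀'
      (∀ σ τ, MCSat Ghat σ τ → σ none = τ none) ∧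
      -- x_i > x₀ and x_i' > x₀' whenever G ⊢ x_i < x_i'
      (∀ i : Fin n, (∀ σ τ, MCSat G σ τ → σ i < τ i) →
        ∀ σ τ : Option (Fin n) → ℤ, MCSat Ghat σ τ →
          σ none < σ (some i) ∧ τ none < τ (some i)) ∧
      -- x_i < x₀ and x_i' < x₀' whenever G ⊢ x_i > x_i'
      (∀ i : Fin n, (∀ σ τ, MCSat G σ τ → τ i < σ i) →
        ∀ σ τ : Option (Fin n) → ℤ, MCSat Ghat σ τ →
          σ (some i) < σ none ∧ τ (some i) < τ none) ∧
      -- every variable is related to x₀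
      (∀ i : Fin n,
        (∀ σ τ : Option (Fin n) → ℤ, MCSat Ghat σ τ → σ (some i) ≤ σ none) ∨
        (∀ σ τ : Option (Fin n) → ℤ, MCSat Ghat σ τ → σ none ≤ σ (some i))) ∧
      -- Ghat remains satisfiable
      (∃ σ τ, MCSat Ghat σ τ) ∧
      -- Ghat remains idempotent
      (∀ u v b,
        (∀ σ τ : Option (Fin n) → ℤ,
          (∃ μ, MCSat Ghat σ μ ∧ MCSat Ghat μ τ) → CmpB σ τ u v b) ↔
        (∀ σ τ, MCSat Ghat σ τ → CmpB σ τ u v b)) := by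
  have hG : MCIdempotent G := hidem
  refine ⟨Extension G (ForcedBelow G), fun _ _ _ => .lift,
    fun _ _ h => (mcsat_extension_iff.1 h).2.1, fun i hi σ τ h => ?_, fun i hi σ τ h => ?_,
    fun i => ?_, exists_mcsat_extension (fun _ _ _ => hG.forcedBelow_of_entails) hsat,
    hG.extension hsat⟩
  · have hinc : Increasing G i := fun σ τ hs => by simpa using hi σ τ hs
    have hb : ¬ ForcedBelow G i := fun hb => by
      obtain ⟨j, hj, hij⟩ := hG.exists_decreasing_of_forcedBelow hinc hb
      exact hLTT1fail ⟨i, j, hi, fun σ τ hs => by simpa using hj σ τ hs,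
        .inl fun σ τ hs => by simpa using hij σ τ hs⟩
    exact (mcsat_extension_splits h i).2 hb
  · have hb : ForcedBelow G i := Decreasing.forcedBelow fun σ τ hs => by simpa using hi σ τ hs
    exact (mcsat_extension_splits h i).1 hb
  · by_cases hb : ForcedBelow G i
    · exact .inl fun _ _ h => ((mcsat_extension_splits h i).1 hb).1.le
    · exact .inr fun _ _ h => ((mcsat_extension_splits h i).2 hb).1.le

/-- If an idempotent, consequence-closed, satisfiable cyclic MC `G` fails the
local test LTT1, then `G` can be extended with a fresh variable x₀ (`none`),
constrained by x₀ = x₀', with x_i > x₀ added whenever G ⊢ x_i < x_i',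
x_i < x₀ added whenever G ⊢ x_i > x_i', and every remaining variable related to
x₀, such that the extension Ghat is still satisfiable and idempotent. -/
theorem stmt_18 (n : ℕ) (G : (Fin n ⊕ Fin n) → (Fin n ⊕ Fin n) → Bool → Prop)
    (hclosed : ∀ u v b, (∀ σ τ, MCSat G σ τ → CmpB σ τ u v b) → G u v b)
    (hidem : ∀ u v b,
      (∀ σ τ : Fin n → ℤ, (∃ μ, MCSat G σ μ ∧ MCSat G μ τ) → CmpB σ τ u v b) ↔
      (∀ σ τ, MCSat G σ τ → CmpB σ τ u v b))
    (hsat : ∃ σ τ, MCSat G σ τ)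
    (hLTT1fail : ¬ ∃ i j : Fin n,
      (∀ σ τ, MCSat G σ τ → σ i < τ i) ∧
      (∀ σ τ, MCSat G σ τ → τ j < σ j) ∧
      ((∀ σ τ, MCSat G σ τ → σ i ≤ σ j) ∨ (∀ σ τ, MCSat G σ τ → τ i ≤ τ j))) :
    ∃ Ghat : (Option (Fin n) ⊕ Option (Fin n)) → (Option (Fin n) ⊕ Option (Fin n))
        → Bool → Prop,
      -- Ghat extends G
      (∀ u v b, G u v b → Ghat (Sum.map some some u) (Sum.map some some v) b) ∧
      -- x₀ = x₀'
      (∀ σ τ, MCSat Ghat σ τ → σ none = τ none) ∧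
      -- x_i > x₀ and x_i' > x₀' whenever G ⊢ x_i < x_i'
      (∀ i : Fin n, (∀ σ τ, MCSat G σ τ → σ i < τ i) →
        ∀ σ τ : Option (Fin n) → ℤ, MCSat Ghat σ τ →
          σ none < σ (some i) ∧ τ none < τ (some i)) ∧
      -- x_i < x₀ and x_i' < x₀' whenever G ⊢ x_i > x_i'
      (∀ i : Fin n, (∀ σ τ, MCSat G σ τ → τ i < σ i) →
        ∀ σ τ : Option (Fin n) → ℤ, MCSat Ghat σ τ →
          σ (some i) < σ none ∧ τ (some i) < τ none) ∧
      -- every variable is related to x₀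
      (∀ i : Fin n,
        (∀ σ τ : Option (Fin n) → ℤ, MCSat Ghat σ τ → σ (some i) ≤ σ none) ∨
        (∀ σ τ : Option (Fin n) → ℤ, MCSat Ghat σ τ → σ none ≤ σ (some i))) ∧
      -- Ghat remains satisfiable
      (∃ σ τ, MCSat Ghat σ τ) ∧
      -- Ghat remains idempotent
      (∀ u v b,
        (∀ σ τ : Option (Fin n) → ℤ,
          (∃ μ, MCSat Ghat σ μ ∧ MCSat Ghat μ τ) → CmpB σ τ u v b) ↔
        (∀ σ τ, MCSat Ghat σ τ → CmpB σ τ u v b)) :=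
  stmt_18_general n G hidem hsat hLTT1fail
end
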